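/- arXiv:1802.09051 — 5 statements merged into one kernel-verified Lean document; each statement's English description precedes it below -/
import Mathlib

section
/- If G is a connected graph with γ(G) = β(G), then the minimum degree δ(G) is at most 2. -/
/-!
Suppose every vertex has degree at least 3 and let `C` be a minimum vertex cover. Some vertex
`i` lies outside `C`, so all its neighbours lie in `C`; pick two of them, `a` and `b`. Trading
`a` and `b` for `i` gives a dominating set of size `|C| - 1`: `i` dominates `a` and `b`, and any
other vertex outside `C` has at least three neighbours, all in `C`, so one of them survives.
Hence `γ(G) < β(G)`.
-/

open Finset

variable {V : Type} [Fintype V] [DecidableEq V]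

def IsDomSet (G : SimpleGraph V) (D : Finset V) : Prop :=
  ∀ v : V, v ∉ D → ∃ u ∈ D, G.Adj u v

noncomputable def domNum (G : SimpleGraph V) : ℕ :=
  sInf {n | ∃ D : Finset V, IsDomSet G D ∧ D.card = n}

def IsVertexCover (G : SimpleGraph V) (C : Finset V) : Prop :=
  ∀ ⦃u v : V⦄, G.Adj u v → u ∈ C ∨ v ∈ C

noncomputable def coverNum (G : SimpleGraph V) : ℕ :=
  sInf {n | ∃ C : Finset V, IsVertexCover G C ∧ C.card = n}

def IsIndepFinset (G : SimpleGraph V) (I : Finset V) : Prop :=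
  ∀ u ∈ I, ∀ v ∈ I, ¬ G.Adj u v

noncomputable def indepNum (G : SimpleGraph V) : ℕ :=
  sSup {n | ∃ I : Finset V, IsIndepFinset G I ∧ I.card = n}

def IsLeaf (G : SimpleGraph V) [DecidableRel G.Adj] (v : V) : Prop :=
  G.degree v = 1

def IsSupport (G : SimpleGraph V) [DecidableRel G.Adj] (v : V) : Prop :=
  ∃ u, G.Adj v u ∧ IsLeaf G u

def IsWeakSupport (G : SimpleGraph V) [DecidableRel G.Adj] (v : V) : Prop :=
  ((G.neighborFinset v).filter fun l => G.degree l = 1).card = 1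

def IsBipartition (G : SimpleGraph V) (A B : Finset V) : Prop :=
  A ∪ B = Finset.univ ∧ Disjoint A B ∧
    ∀ ⦃u v : V⦄, G.Adj u v → (u ∈ A ∧ v ∈ B) ∨ (u ∈ B ∧ v ∈ A)

namespace SimpleGraph

variable (G : SimpleGraph V)

lemma isVertexCover_erase_univ (v : V) : IsVertexCover G (univ.erase v) := by
  intro x y hxy
  by_cases hx : x = v
  · exact Or.inr (mem_erase.mpr ⟨fun hy => hxy.ne (hx.trans hy.symm), mem_univ y⟩)
  · exact Or.inl (mem_erase.mpr ⟨hx, mem_univ x⟩)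

lemma coverNum_lt_card [Nonempty V] : coverNum G < Fintype.card V := by
  obtain ⟨v⟩ := ‹Nonempty V›
  calc coverNum G ≤ #(univ.erase v) := Nat.sInf_le ⟨_, G.isVertexCover_erase_univ v, rfl⟩
    _ < Fintype.card V := card_erase_lt_of_mem (mem_univ v)

lemma isDomSet_insert_sdiff_pair [DecidableRel G.Adj] {C : Finset V} (hC : IsVertexCover G C)
    (hdeg : ∀ v ∉ C, 3 ≤ G.degree v) {i a b : V} (ha : G.Adj i a)
    (hb : G.Adj i b) : IsDomSet G (insert i (C \ {a, b})) := by
  intro v hv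
  simp only [mem_insert, mem_sdiff, mem_singleton, not_or, not_and_or,
    not_not] at hv
  obtain ⟨-, hvC | rfl | rfl⟩ := hv
  · have hN : G.neighborFinset v ⊆ C := fun u hu =>
      (hC ((G.mem_neighborFinset v u).mp hu).symm).resolve_right hvC
    have hlt : #({a, b} : Finset V) < #(G.neighborFinset v) := by
      rw [card_neighborFinset_eq_degree]
      exact (card_le_two).trans_lt (hdeg v hvC)
    obtain ⟨u, hu, hab⟩ := exists_mem_notMem_of_card_lt_card hlt
    exact ⟨u, mem_insert_of_mem (mem_sdiff.mpr ⟨hN hu, hab⟩),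
      ((G.mem_neighborFinset v u).mp hu).symm⟩
  · exact ⟨i, mem_insert_self _ _, ha⟩
  · exact ⟨i, mem_insert_self _ _, hb⟩

theorem domNum_lt_coverNum_of_forall_three_le_degree [DecidableRel G.Adj] [Nonempty V]
    (hdeg : ∀ v, 3 ≤ G.degree v) : domNum G < coverNum G := by
  obtain ⟨C, hC, hCcard⟩ : ∃ C : Finset V, IsVertexCover G C ∧ #C = coverNum G :=
    Nat.sInf_mem (s := {n | ∃ C : Finset V, IsVertexCover G C ∧ #C = n})
      ⟨_, univ, fun u _ _ => Or.inl (mem_univ u), rfl⟩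
  obtain ⟨i, -, hi⟩ : ∃ i ∈ univ, i ∉ C :=
    exists_mem_notMem_of_card_lt_card (hCcard ▸ G.coverNum_lt_card)
  have htwo : 1 < #(G.neighborFinset i) := by
    rw [card_neighborFinset_eq_degree]; linarith [hdeg i]
  obtain ⟨a, ha, b, hb, hab⟩ := one_lt_card.mp htwo
  rw [mem_neighborFinset] at ha hb
  have hsub : ({a, b} : Finset V) ⊆ C := by
    rw [insert_subset_iff, singleton_subset_iff]
    exact ⟨(hC ha).resolve_left hi, (hC hb).resolve_left hi⟩
  have hcard : #(insert i (C \ {a, b})) + 1 = #C := by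
    have h2 := card_le_card hsub
    rw [card_pair hab] at h2
    rw [card_insert_of_notMem fun h => hi (mem_sdiff.mp h).1, card_sdiff_of_subset hsub,
      card_pair hab]
    omega
  have hdom : domNum G ≤ #(insert i (C \ {a, b})) :=
    Nat.sInf_le ⟨_, G.isDomSet_insert_sdiff_pair hC (fun v _ => hdeg v) ha hb, rfl⟩
  omega

end SimpleGraph

theorem minDegree_le_two_of_domNum_eq_coverNum_general (G : SimpleGraph V) [DecidableRel G.Adj]
    (h : domNum G = coverNum G) :
    G.minDegree ≤ 2 := by
  by_contra! hδ
  have : Nonempty V := by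
    by_contra hV
    have := not_nonempty_iff.mp hV
    simp [SimpleGraph.minDegree_of_subsingleton] at hδ
  exact (G.domNum_lt_coverNum_of_forall_three_le_degree
    fun v => hδ.trans_le (G.minDegree_le_degree v)).ne h

theorem minDegree_le_two_of_domNum_eq_coverNum (G : SimpleGraph V) [DecidableRel G.Adj]
    [Nonempty V] (hconn : G.Connected) (h : domNum G = coverNum G) :
    G.minDegree ≤ 2 :=
  minDegree_le_two_of_domNum_eq_coverNum_general G h
end

section
/- If G is a connected graph with γ(G) = β(G) and δ(G) = 2, then G is bipartite. -/
open Finset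

variable {V : Type} [Fintype V] [DecidableEq V]

/-!
Take a minimum vertex cover `C`. If two vertices `u v ∈ C` were adjacent, then `C.erase u`
would still dominate `G`: `u` is dominated by `v`, and a vertex `w ∉ C` has all of its
at least two neighbours in `C`, hence one other than `u`. This would give `γ(G) < β(G)`.
So `C` is independent, and `C` together with its complement is a bipartition.
-/

section

variable {α : Type} {G : SimpleGraph α} {C : Finset α}

theorem domNum_le_card [Fintype α] {D : Finset α} (hD : IsDomSet G D) : domNum G ≤ D.card :=
  Nat.sInf_le ⟨D, hD, rfl⟩

theorem exists_isVertexCover_card_eq_coverNum [Fintype α] (G : SimpleGraph α) :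
    ∃ C : Finset α, IsVertexCover G C ∧ C.card = coverNum G :=
  Nat.sInf_mem (s := {n | ∃ C : Finset α, IsVertexCover G C ∧ C.card = n})
    ⟨_, Finset.univ, fun u _ _ => Or.inl (Finset.mem_univ u), rfl⟩

namespace IsVertexCover

theorem mem_of_adj_of_notMem (hC : IsVertexCover G C) {u v : α} (hadj : G.Adj u v)
    (hu : u ∉ C) : v ∈ C :=
  (hC hadj).resolve_left hu

theorem isDomSet_erase [Fintype α] [DecidableEq α] [DecidableRel G.Adj]
    (hC : IsVertexCover G C) (hdeg : ∀ w ∉ C, 2 ≤ G.degree w) {u v : α} (hadj : G.Adj u v)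
    (hv : v ∈ C) : IsDomSet G (C.erase u) := by
  intro w hw
  by_cases hwu : w = u
  · subst hwu
    exact ⟨v, mem_erase.2 ⟨hadj.ne.symm, hv⟩, hadj.symm⟩
  · have hwC : w ∉ C := fun hwC => hw (mem_erase.2 ⟨hwu, hwC⟩)
    obtain ⟨x, hx, hxu⟩ := exists_mem_ne (hdeg w hwC) u
    have hwx : G.Adj w x := (G.mem_neighborFinset w x).1 hx
    exact ⟨x, mem_erase.2 ⟨hxu, hC.mem_of_adj_of_notMem hwx hwC⟩, hwx.symm⟩

theorem isIndepFinset_of_coverNum_le_domNum [Fintype α] [DecidableEq α] [DecidableRel G.Adj]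
    (hC : IsVertexCover G C) (hcard : C.card = coverNum G) (hle : coverNum G ≤ domNum G)
    (hδ : 2 ≤ G.minDegree) : IsIndepFinset G C := by
  intro u hu v hv hadj
  have hdeg : ∀ w ∉ C, 2 ≤ G.degree w := fun w _ => hδ.trans (G.minDegree_le_degree w)
  have hdom := domNum_le_card (hC.isDomSet_erase hdeg hadj hv)
  have hlt := card_erase_lt_of_mem hu
  omega

theorem colorable_two (hC : IsVertexCover G C) (hI : IsIndepFinset G C) : G.Colorable 2 := by
  classical
  refine ⟨SimpleGraph.Coloring.mk (fun v => if v ∈ C then (0 : Fin 2) else 1)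
    fun {u v} hadj => ?_⟩
  by_cases hu : u ∈ C
  · have hv : v ∉ C := fun hv => hI u hu v hv hadj
    simp [hu, hv]
  · simp [hu, hC.mem_of_adj_of_notMem hadj hu]

end IsVertexCover

end

theorem bipartite_of_domNum_eq_coverNum_minDegree_two_general (G : SimpleGraph V) [DecidableRel G.Adj]
    (h : domNum G = coverNum G)
    (hdelta : G.minDegree = 2) :
    G.Colorable 2 := by
  obtain ⟨C, hC, hcard⟩ := exists_isVertexCover_card_eq_coverNum G
  exact hC.colorable_two (hC.isIndepFinset_of_coverNum_le_domNum hcard h.ge hdelta.ge)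

theorem bipartite_of_domNum_eq_coverNum_minDegree_two (G : SimpleGraph V) [DecidableRel G.Adj]
    [Nonempty V] (hconn : G.Connected) (h : domNum G = coverNum G)
    (hdelta : G.minDegree = 2) :
    G.Colorable 2 :=
  bipartite_of_domNum_eq_coverNum_minDegree_two_general G h hdelta
end

section
/- A graph G is a corona graph (i.e., G = F ∘ K₁ for some graph F) if and only if every vertex of G is either a leaf or is adjacent to exactly one leaf of G. -/
open Finset

variable {V : Type} [Fintype V] [DecidableEq V]

def corona {W : Type} (F : SimpleGraph W) : SimpleGraph (W ⊕ W) where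
  Adj x y :=
    match x, y with
    | Sum.inl u, Sum.inl v => F.Adj u v
    | Sum.inl u, Sum.inr v => u = v
    | Sum.inr u, Sum.inl v => u = v
    | Sum.inr _, Sum.inr _ => False
  symm := by
    constructor
    intro x y h
    cases x <;> cases y <;> simp_all <;> exact h.symm
  loopless := by
    constructor
    intro x
    cases x <;> simp

/-!
Call an edge pendant if one of its ends is a leaf. The condition on `G` says exactly that every
vertex lies on a unique pendant edge, i.e. that the pendant edges form a perfect matching; this is
invariant under isomorphism, and in `F ∘ K₁` the matching is `Sum.swap`. Conversely, the matching
is a fixed-point-free involution `p`, and every pair `{v, p v}` contains a vertex whose partner is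
a leaf. Choosing one such vertex from each pair gives a set `s`, and `G` is the corona of the
subgraph induced on `s`, the leaf `p v` playing the role of the new vertex `v'`.
-/

theorem Function.Involutive.exists_transversal {α : Type*} {p : α → α}
    (hp : Function.Involutive p) (hfix : ∀ a, p a ≠ a) (A : Set α) (hA : ∀ a, a ∈ A ∨ p a ∈ A) :
    ∃ s ⊆ A, ∀ a, a ∈ s ↔ p a ∉ s := by
  let _ : LinearOrder α := WellOrderingRel.isWellOrder.linearOrder
  refine ⟨{a | a ∈ A ∧ (p a ∈ A → a < p a)}, fun a ha => ha.1, fun a => ?_⟩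
  simp only [Set.mem_ofPred_eq, hp a]
  grind [hfix a, hA a]

namespace SimpleGraph

section PendantEdge

variable {α β : Type*} (G : SimpleGraph α) {H : SimpleGraph β}

def IsPendantEdge (v u : α) : Prop :=
  G.Adj v u ∧ ((∃! w, G.Adj v w) ∨ ∃! w, G.Adj u w)

variable {G}

theorem IsPendantEdge.symm {v u : α} (h : G.IsPendantEdge v u) : G.IsPendantEdge u v :=
  ⟨h.1.symm, h.2.symm⟩

theorem Iso.existsUnique_adj_iff (e : G ≃g H) (v : α) :
    (∃! w, H.Adj (e v) w) ↔ ∃! w, G.Adj v w :=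
  (e.toEquiv.existsUnique_congr fun _ => e.map_adj_iff.symm).symm

theorem Iso.isPendantEdge_iff (e : G ≃g H) (v u : α) :
    H.IsPendantEdge (e v) (e u) ↔ G.IsPendantEdge v u := by
  simp only [IsPendantEdge, e.map_adj_iff, e.existsUnique_adj_iff]

theorem Iso.forall_existsUnique_isPendantEdge (e : G ≃g H)
    (h : ∀ x, ∃! y, H.IsPendantEdge x y) (v : α) : ∃! u, G.IsPendantEdge v u :=
  (e.toEquiv.existsUnique_congr fun u => (e.isPendantEdge_iff v u).symm).mpr (h (e v))

end PendantEdge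

section Corona

variable {α : Type} {G : SimpleGraph α}

theorem exists_iso_corona_induce {p : α → α} (hp : Function.Involutive p) {s : Set α}
    (hs : ∀ v, v ∈ s ↔ p v ∉ s) (hadj : ∀ v ∈ s, ∀ u, G.Adj (p v) u ↔ u = v) :
    Nonempty (corona (G.induce s) ≃g G) := by
  let f : s ⊕ s → α := Sum.elim Subtype.val (p ∘ Subtype.val)
  have hf : f.Bijective := by
    refine ⟨?_, fun v => ?_⟩
    · rintro (a | a) (b | b) h
      · exact congrArg Sum.inl (Subtype.ext h)
      · exact ((hs b).mp b.2 ((show (a : α) = p b from h) ▸ a.2)).elim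
      · exact ((hs a).mp a.2 ((show p a = (b : α) from h) ▸ b.2)).elim
      · exact congrArg Sum.inr (Subtype.ext (hp.injective h))
    · by_cases hv : v ∈ s
      · exact ⟨Sum.inl ⟨v, hv⟩, rfl⟩
      · exact ⟨Sum.inr ⟨p v, by rwa [hs, hp]⟩, hp v⟩
  refine ⟨⟨Equiv.ofBijective f hf, ?_⟩⟩
  rintro (a | a) (b | b)
  · exact Iff.rfl
  · exact (G.adj_comm _ _).trans ((hadj b b.2 a).trans Subtype.ext_iff.symm)
  · exact (hadj a a.2 b).trans (Subtype.ext_iff.symm.trans eq_comm)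
  · refine iff_of_false (fun (h : G.Adj (p a) (p b)) => (hs b).mp b.2 ?_) id
    rw [(hadj a a.2 _).mp h]
    exact a.2

theorem exists_iso_corona_of_existsUnique_isPendantEdge
    (h : ∀ v, ∃! u, G.IsPendantEdge v u) : ∃ s : Set α, Nonempty (G ≃g corona (G.induce s)) := by
  choose p hp hp_unique using h
  have hinv : Function.Involutive p := fun v => (hp_unique (p v) v (hp v).symm).symm
  obtain ⟨s, hsA, hs⟩ := hinv.exists_transversal (fun v => (hp v).1.ne')
    {v | ∃! w, G.Adj (p v) w} fun v => (hp v).2.symm.imp id fun hv => by rwa [Set.mem_ofPred, hinv]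
  refine ⟨s, (exists_iso_corona_induce hinv hs fun v hv u => ?_).map Iso.symm⟩
  refine ⟨fun hu => ?_, fun hu => hu ▸ (hp v).1.symm⟩
  rw [hp_unique (p v) u ⟨hu, Or.inl (hsA hv)⟩, hinv]

theorem corona_adj_inr_iff {W : Type} (F : SimpleGraph W) (w : W) (y : W ⊕ W) :
    (corona F).Adj (Sum.inr w) y ↔ y = Sum.inl w := by
  cases y <;> simp [corona, eq_comm]

theorem corona_isPendantEdge_iff {W : Type} (F : SimpleGraph W) (x y : W ⊕ W) :
    (corona F).IsPendantEdge x y ↔ y = x.swap := by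
  have leaf_inr (w : W) : ∃! y, (corona F).Adj (Sum.inr w) y :=
    ⟨Sum.inl w, (corona_adj_inr_iff F w _).mpr rfl, fun y => (corona_adj_inr_iff F w y).mp⟩
  rcases x with w | w
  · rcases y with u | u
    · refine iff_of_false ?_ Sum.inl_ne_inr
      rintro ⟨h, hw | hu⟩
      · exact Sum.inl_ne_inr (hw.unique (show F.Adj w u from h) (show w = w from rfl))
      · exact Sum.inl_ne_inr (hu.unique (show F.Adj u w from h.symm) (show u = u from rfl))
    · exact ⟨fun h => congrArg Sum.inr (show w = u from h.1).symm,
        fun h => ⟨by cases h; rfl, Or.inr (leaf_inr u)⟩⟩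
  · exact ⟨fun h => (corona_adj_inr_iff F w y).mp h.1,
      fun h => ⟨(corona_adj_inr_iff F w y).mpr h, Or.inl (leaf_inr w)⟩⟩

end Corona

end SimpleGraph

open SimpleGraph

omit [DecidableEq V] in
theorem isLeaf_or_isWeakSupport_iff (G : SimpleGraph V) [DecidableRel G.Adj] (v : V) :
    IsLeaf G v ∨ IsWeakSupport G v ↔ ∃! u, G.IsPendantEdge v u := by
  rw [IsLeaf, degree_eq_one_iff_existsUnique_adj]
  by_cases hv : ∃! u, G.Adj v u
  · simp [IsPendantEdge, hv]
  · rw [IsWeakSupport, card_eq_one_iff_existsUnique]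
    simp only [IsPendantEdge, hv, false_or, mem_filter, mem_neighborFinset,
      degree_eq_one_iff_existsUnique_adj]

theorem corona_graph_iff (G : SimpleGraph V) [DecidableRel G.Adj] :
    (∃ (W : Type) (F : SimpleGraph W), Nonempty (G ≃g corona F)) ↔
      ∀ v : V, IsLeaf G v ∨ IsWeakSupport G v := by
  simp only [isLeaf_or_isWeakSupport_iff]
  constructor
  · rintro ⟨W, F, ⟨e⟩⟩
    exact e.forall_existsUnique_isPendantEdge fun x => ⟨x.swap, by simp [corona_isPendantEdge_iff]⟩
  · intro h
    obtain ⟨s, e⟩ := exists_iso_corona_of_existsUnique_isPendantEdge h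
    exact ⟨s, G.induce s, e⟩
end

section
/- Let T' be a tree with bipartition (A',B'), |A'| ≤ |B'|, γ(T') = |A'|, and let a' ∈ A' be a support vertex of T'. Let T be obtained from T' by adding two new vertices a and b with edges ab and ba'. Then γ(T) = |A'| + 1, which equals the size of the smaller partite set A' ∪ {a} of T. -/
/-!
Adding the pendant path `a' - b - a` raises the domination number by exactly one. A dominating
set of `T'` together with `b` dominates `T`. Conversely, a dominating set of `T` must contain
`a` or `b`, and its trace on `T'` dominates every vertex except possibly `a'`; since `a'`
carries a leaf `ℓ`, trading `ℓ` for `a'` (or noting that `a'` is already needed to dominate `ℓ`)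
repairs it into a dominating set of `T'` that is no larger.
-/

open Finset

variable {V : Type} [Fintype V] [DecidableEq V]

/-- The tree obtained from `T'` by adding two new vertices `a = Sum.inr true` and
`b = Sum.inr false`, with edges `ab` and `b a'`. -/
def attachP2atSupport (T' : SimpleGraph V) (a' : V) : SimpleGraph (V ⊕ Bool) where
  Adj x y :=
    match x, y with
    | Sum.inl u, Sum.inl v => T'.Adj u v
    | Sum.inl u, Sum.inr c => c = false ∧ u = a'
    | Sum.inr c, Sum.inl v => c = false ∧ v = a'
    | Sum.inr c, Sum.inr d => c ≠ d
  symm := by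
    constructor
    intro x y h
    cases x <;> cases y <;> simp_all
    · exact h.symm
    · exact Ne.symm h
  loopless := by
    constructor
    intro x
    cases x <;> simp

omit [Fintype V] [DecidableEq V] in
theorem IsDomSet.domNum_le {G : SimpleGraph V} {D : Finset V} (hD : IsDomSet G D) :
    domNum G ≤ D.card :=
  Nat.sInf_le ⟨D, hD, rfl⟩

omit [DecidableEq V] in
theorem exists_isDomSet_card_eq_domNum (G : SimpleGraph V) :
    ∃ D, IsDomSet G D ∧ D.card = domNum G :=
  Nat.sInf_mem (s := {n | ∃ D : Finset V, IsDomSet G D ∧ D.card = n})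
    ⟨#univ, univ, fun v hv => absurd (mem_univ v) hv, rfl⟩

omit [DecidableEq V] in
theorem IsLeaf.eq_of_adj {G : SimpleGraph V} [DecidableRel G.Adj] {l v w : V}
    (hl : IsLeaf G l) (hv : G.Adj l v) (hw : G.Adj l w) : v = w :=
  (SimpleGraph.degree_eq_one_iff_existsUnique_adj.mp hl).unique hv hw

theorem IsSupport.domNum_le_card {G : SimpleGraph V} [DecidableRel G.Adj] {x : V}
    (hx : IsSupport G x) {S : Finset V} (hS : ∀ v, v ≠ x → v ∉ S → ∃ u ∈ S, G.Adj u v) :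
    domNum G ≤ S.card := by
  obtain ⟨l, hxl, hl⟩ := hx
  by_cases hlS : l ∈ S
  · calc domNum G ≤ (insert x (S.erase l)).card := IsDomSet.domNum_le ?_
      _ ≤ (S.erase l).card + 1 := card_insert_le _ _
      _ = S.card := card_erase_add_one hlS
    intro v hv
    by_cases hvl : v = l
    · exact ⟨x, mem_insert_self _ _, hvl ▸ hxl⟩
    obtain ⟨u, huS, huv⟩ := hS v (fun h => hv (h ▸ mem_insert_self _ _))
      (fun h => hv (mem_insert_of_mem (mem_erase.2 ⟨hvl, h⟩)))
    have hul : u ≠ l := by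
      rintro rfl
      exact hv (hl.eq_of_adj huv hxl.symm ▸ mem_insert_self _ _)
    exact ⟨u, mem_insert_of_mem (mem_erase.2 ⟨hul, huS⟩), huv⟩
  · have hxS : x ∈ S := by
      obtain ⟨u, huS, hul⟩ := hS l (G.ne_of_adj hxl).symm hlS
      rwa [← hl.eq_of_adj hul.symm hxl.symm]
    exact IsDomSet.domNum_le fun v hv => hS v (fun h => hv (h ▸ hxS)) hv

section attachP2atSupport

variable {T' : SimpleGraph V} {a' : V}

omit [Fintype V] [DecidableEq V] in
@[simp]
theorem attachP2atSupport_adj_inl_inl {u v : V} :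
    (attachP2atSupport T' a').Adj (.inl u) (.inl v) ↔ T'.Adj u v := Iff.rfl

omit [Fintype V] [DecidableEq V] in
@[simp]
theorem attachP2atSupport_adj_inl_inr {u : V} {c : Bool} :
    (attachP2atSupport T' a').Adj (.inl u) (.inr c) ↔ c = false ∧ u = a' := Iff.rfl

omit [Fintype V] [DecidableEq V] in
@[simp]
theorem attachP2atSupport_adj_inr_inl {c : Bool} {v : V} :
    (attachP2atSupport T' a').Adj (.inr c) (.inl v) ↔ c = false ∧ v = a' := Iff.rfl

omit [Fintype V] [DecidableEq V] in
@[simp]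
theorem attachP2atSupport_adj_inr_inr {c d : Bool} :
    (attachP2atSupport T' a').Adj (.inr c) (.inr d) ↔ c ≠ d := Iff.rfl

omit [DecidableEq V] in
theorem domNum_attachP2atSupport_le : domNum (attachP2atSupport T' a') ≤ domNum T' + 1 := by
  obtain ⟨D, hD, hcard⟩ := exists_isDomSet_card_eq_domNum T'
  calc domNum (attachP2atSupport T' a') ≤ (D.disjSum {false}).card := IsDomSet.domNum_le ?_
    _ = domNum T' + 1 := by rw [card_disjSum, card_singleton, hcard]
  rintro (v | _ | _) hv
  · obtain ⟨u, hu, huv⟩ := hD v (by simpa using hv)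
    exact ⟨.inl u, by simpa using hu, huv⟩
  · simp at hv
  · exact ⟨.inr false, by simp, by simp⟩

omit [Fintype V] [DecidableEq V] in
theorem IsDomSet.toLeft_attachP2atSupport {D : Finset (V ⊕ Bool)}
    (hD : IsDomSet (attachP2atSupport T' a') D) :
    ∀ v, v ≠ a' → v ∉ D.toLeft → ∃ u ∈ D.toLeft, T'.Adj u v := by
  intro v hva hv
  obtain ⟨u | c, hu, huv⟩ := hD (.inl v) (by simpa using hv)
  · exact ⟨u, by simpa using hu, huv⟩
  · exact absurd (attachP2atSupport_adj_inr_inl.mp huv).2 hva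

omit [Fintype V] in
theorem IsDomSet.toRight_nonempty_of_attachP2atSupport {D : Finset (V ⊕ Bool)}
    (hD : IsDomSet (attachP2atSupport T' a') D) : D.toRight.Nonempty := by
  by_cases ha : .inr true ∈ D
  · exact ⟨true, by simpa using ha⟩
  obtain ⟨u | c, hu, huv⟩ := hD (.inr true) ha
  · simp at huv
  · exact ⟨c, by simpa using hu⟩

theorem IsSupport.domNum_add_one_le_domNum_attachP2atSupport [DecidableRel T'.Adj]
    (ha' : IsSupport T' a') : domNum T' + 1 ≤ domNum (attachP2atSupport T' a') := by
  obtain ⟨D, hD, hcard⟩ := exists_isDomSet_card_eq_domNum (attachP2atSupport T' a')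
  calc domNum T' + 1 ≤ D.toLeft.card + D.toRight.card :=
        add_le_add (ha'.domNum_le_card hD.toLeft_attachP2atSupport)
          hD.toRight_nonempty_of_attachP2atSupport.card_pos
    _ = domNum (attachP2atSupport T' a') := by rw [card_toLeft_add_card_toRight, hcard]

end attachP2atSupport

theorem operation_O3_general (T' : SimpleGraph V) [DecidableRel T'.Adj] (A' : Finset V) (a' : V)
    (hsupp : IsSupport T' a') (hdom : domNum T' = A'.card) :
    domNum (attachP2atSupport T' a') = A'.card + 1 := by
  rw [← hdom]
  exact le_antisymm domNum_attachP2atSupport_le hsupp.domNum_add_one_le_domNum_attachP2atSupport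

theorem operation_O3 (T' : SimpleGraph V) [DecidableRel T'.Adj] (A' B' : Finset V) (a' : V)
    (htree : T'.IsTree) (hbip : IsBipartition T' A' B') (hAB : A'.card ≤ B'.card)
    (ha' : a' ∈ A') (hsupp : IsSupport T' a') (hdom : domNum T' = A'.card) :
    domNum (attachP2atSupport T' a') = A'.card + 1 :=
  operation_O3_general T' A' a' hsupp hdom
end

section
/- Let (A,B) be the bipartition of the intersection graph G of a grid (a family of vertical and horizontal segments in the plane, pairwise-collinear ones disjoint, with connected union), where A consists of the vertical and B of the horizontal segments. If G has no leaves and for every two distinct x, y ∈ A with a common neighbor there exists z ∈ B with N(z) = {x,y}, then every vertex in B has degree at most 4. -/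
open Finset

variable {V : Type} [Fintype V] [DecidableEq V]

/-- An axis-parallel nondegenerate closed line segment in the plane. -/
structure GridSeg where
  a : ℝ × ℝ
  b : ℝ × ℝ
  ne : a ≠ b
  aligned : a.1 = b.1 ∨ a.2 = b.2

/-- The set of points of a segment. -/
def GridSeg.toSet (s : GridSeg) : Set (ℝ × ℝ) := segment ℝ s.a s.b

def GridSeg.Vertical (s : GridSeg) : Prop := s.a.1 = s.b.1

def GridSeg.Horizontal (s : GridSeg) : Prop := s.a.2 = s.b.2

/-- A family of segments is a grid if the segments are distinct (as point sets),
there are at least two of them, collinear segments are disjoint,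
and the union of all segments is a connected subset of the plane. -/
def IsGrid {ι : Type} [Fintype ι] (f : ι → GridSeg) : Prop :=
  (∀ i j, (f i).toSet = (f j).toSet → i = j) ∧
  2 ≤ Fintype.card ι ∧
  (∀ i j, i ≠ j → Collinear ℝ ((f i).toSet ∪ (f j).toSet) →
    Disjoint (f i).toSet (f j).toSet) ∧
  IsConnected (⋃ i, (f i).toSet)

/-- The intersection graph of a family of segments. -/
def gridGraph {ι : Type} (f : ι → GridSeg) : SimpleGraph ι where
  Adj i j := i ≠ j ∧ ((f i).toSet ∩ (f j).toSet).Nonempty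
  symm := by
    constructor
    intro i j h
    exact ⟨h.1.symm, by rw [Set.inter_comm]; exact h.2⟩
  loopless := by
    constructor
    intro i h
    exact h.1 rfl

/-!
Let `b` be a horizontal segment at height `h` meeting five vertical segments `e₀, …, e₄`,
ordered from left to right. For `k < l` the hypothesis yields a horizontal segment `z_kl`
meeting exactly `e_k` and `e_l`; it spans every column between them, so its height lies outside
the vertical extent of each `e_m` with `k < m < l`. For interleaved pairs `i < k < j < l`, the
segment `z_ij` meets `e_j` but not `e_k` and `z_kl` meets `e_k` but not `e_j`; as both `e_k` and
`e_j` reach height `h`, the two lie on opposite sides of `b`. The pairs `02, 13, 24, 03, 14` form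
a cycle of five consecutively interleaved pairs, so they cannot alternate sides; this is where
the non-planarity of `K₅` enters.
-/

lemma Set.OrdConnected.lt_iff_not_lt_of_mem_diff {α : Type*} [LinearOrder α] {S T : Set α}
    (hS : S.OrdConnected) (hT : T.OrdConnected) {a p q : α} (haS : a ∈ S) (haT : a ∈ T)
    (hp : p ∈ T \ S) (hq : q ∈ S \ T) : a < p ↔ ¬ a < q := by
  have hpa : p ≠ a := fun h => hp.2 (h ▸ haS)
  have hqa : q ≠ a := fun h => hq.2 (h ▸ haT)
  constructor
  · intro hap haq
    rcases le_total p q with hpq | hqp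
    · exact hp.2 (hS.out haS hq.1 ⟨hap.le, hpq⟩)
    · exact hq.2 (hT.out haT hp.1 ⟨haq.le, hqp⟩)
  · intro haq
    by_contra hap
    have hqa' : q < a := lt_of_le_of_ne (not_lt.1 haq) hqa
    have hpa' : p < a := lt_of_le_of_ne (not_lt.1 hap) hpa
    rcases le_total p q with hpq | hqp
    · exact hq.2 (hT.out hp.1 haT ⟨hpq, hqa'.le⟩)
    · exact hp.2 (hS.out hq.1 haS ⟨hqp, hpa'.le⟩)

lemma not_forall_interleaved_iff_not_fin_five (P : Fin 5 → Fin 5 → Prop) :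
    ¬ ∀ i k j l : Fin 5, i < k → k < j → j < l → (P i j ↔ ¬ P k l) := by
  intro h
  have h₁ := h 0 1 2 3 (by decide) (by decide) (by decide)
  have h₂ := h 1 2 3 4 (by decide) (by decide) (by decide)
  have h₃ := h 0 2 3 4 (by decide) (by decide) (by decide)
  have h₄ := h 0 1 3 4 (by decide) (by decide) (by decide)
  have h₅ := h 0 1 2 4 (by decide) (by decide) (by decide)
  tauto

lemma Set.Finite.exists_fin_strictMono_comp {α β : Type*} [LinearOrder β] {s : Set α}
    (hs : s.Finite) {g : α → β} (hg : s.InjOn g) {n : ℕ} (hn : n ≤ s.ncard) :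
    ∃ e : Fin n → α, (∀ k, e k ∈ s) ∧ StrictMono (g ∘ e) := by
  rw [Set.ncard_eq_toFinset_card s hs] at hn
  obtain ⟨t, hts, htn⟩ := Finset.exists_subset_card_eq
    (hn.trans (Finset.card_image_of_injOn (by simpa using hg)).ge)
  have hpre : ∀ k, ∃ x ∈ hs.toFinset, g x = t.orderEmbOfFin htn k :=
    fun k => Finset.mem_image.1 (hts (t.orderEmbOfFin_mem htn k))
  choose e he hge using hpre
  refine ⟨e, fun k => hs.mem_toFinset.1 (he k), fun k l hkl => ?_⟩
  simp only [Function.comp_apply, hge]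
  exact (t.orderEmbOfFin htn).strictMono hkl

lemma collinear_of_forall_fst_eq {S : Set (ℝ × ℝ)} {c : ℝ} (hS : ∀ p ∈ S, p.1 = c) :
    Collinear ℝ S := by
  rw [collinear_iff_exists_forall_eq_smul_vadd]
  refine ⟨(c, 0), (0, 1), fun p hp => ⟨p.2, ?_⟩⟩
  ext <;> simp [hS p hp]

lemma collinear_of_forall_snd_eq {S : Set (ℝ × ℝ)} {c : ℝ} (hS : ∀ p ∈ S, p.2 = c) :
    Collinear ℝ S := by
  rw [collinear_iff_exists_forall_eq_smul_vadd]
  refine ⟨(0, c), (1, 0), fun p hp => ⟨p.1, ?_⟩⟩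
  ext <;> simp [hS p hp]


namespace GridSeg

def xSpan (s : GridSeg) : Set ℝ := Set.uIcc s.a.1 s.b.1

def ySpan (s : GridSeg) : Set ℝ := Set.uIcc s.a.2 s.b.2

lemma toSet_of_vertical {s : GridSeg} (hv : s.Vertical) : s.toSet = {s.a.1} ×ˢ s.ySpan := by
  rw [toSet, ySpan, Set.singleton_prod, ← segment_eq_uIcc, Prod.image_mk_segment_right,
    show (s.a.1, s.b.2) = s.b from Prod.ext hv rfl]

lemma toSet_of_horizontal {s : GridSeg} (hh : s.Horizontal) : s.toSet = s.xSpan ×ˢ {s.a.2} := by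
  rw [toSet, xSpan, Set.prod_singleton, ← segment_eq_uIcc, Prod.image_mk_segment_left,
    show (s.b.1, s.a.2) = s.b from Prod.ext rfl hh]

lemma inter_nonempty_iff {s t : GridSeg} (hs : s.Horizontal) (ht : t.Vertical) :
    (s.toSet ∩ t.toSet).Nonempty ↔ t.a.1 ∈ s.xSpan ∧ s.a.2 ∈ t.ySpan := by
  rw [toSet_of_horizontal hs, toSet_of_vertical ht]
  constructor
  · rintro ⟨p, ⟨hp₁, hp₂⟩, hq₁, hq₂⟩
    rw [Set.mem_singleton_iff] at hp₂ hq₁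
    exact ⟨hq₁ ▸ hp₁, hp₂ ▸ hq₂⟩
  · rintro ⟨h₁, h₂⟩
    exact ⟨(t.a.1, s.a.2), ⟨h₁, rfl⟩, rfl, h₂⟩

lemma fst_eq_of_mem {s : GridSeg} (hv : s.Vertical) {p : ℝ × ℝ} (hp : p ∈ s.toSet) :
    p.1 = s.a.1 := by
  rw [toSet_of_vertical hv] at hp
  exact hp.1

lemma snd_eq_of_mem {s : GridSeg} (hh : s.Horizontal) {p : ℝ × ℝ} (hp : p ∈ s.toSet) :
    p.2 = s.a.2 := by
  rw [toSet_of_horizontal hh] at hp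
  exact hp.2

end GridSeg

section

variable {ι : Type} {f : ι → GridSeg}

lemma gridGraph_adj_iff {z x : ι} (hz : (f z).Horizontal) (hx : (f x).Vertical) :
    (gridGraph f).Adj z x ↔ (f x).a.1 ∈ (f z).xSpan ∧ (f z).a.2 ∈ (f x).ySpan := by
  have hzx : z ≠ x := by
    rintro rfl
    exact (f z).ne (Prod.ext hx hz)
  rw [← GridSeg.inter_nonempty_iff hz hx]
  exact and_iff_right hzx

lemma snd_notMem_ySpan_of_neighborSet_eq {z x y m : ι} (hz : (f z).Horizontal)
    (hx : (f x).Vertical) (hy : (f y).Vertical) (hm : (f m).Vertical)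
    (hN : (gridGraph f).neighborSet z = {x, y}) (hxm : (f x).a.1 < (f m).a.1)
    (hmy : (f m).a.1 < (f y).a.1) : (f z).a.2 ∉ (f m).ySpan := by
  intro hzm
  have hzx : (gridGraph f).Adj z x := by simp [← SimpleGraph.mem_neighborSet, hN]
  have hzy : (gridGraph f).Adj z y := by simp [← SimpleGraph.mem_neighborSet, hN]
  have hmz : (f m).a.1 ∈ (f z).xSpan :=
    Set.ordConnected_uIcc.uIcc_subset ((gridGraph_adj_iff hz hx).1 hzx).1
      ((gridGraph_adj_iff hz hy).1 hzy).1 (Set.Icc_subset_uIcc ⟨hxm.le, hmy.le⟩)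
  have hmN : m ∈ (gridGraph f).neighborSet z := (gridGraph_adj_iff hz hm).2 ⟨hmz, hzm⟩
  rw [hN] at hmN
  rcases hmN with rfl | rfl
  · exact hxm.false
  · exact hmy.false

lemma lt_snd_iff_not_lt_snd_of_interleaved {κ : Type*} [LinearOrder κ] (e : κ → ι)
    (hv : ∀ k, (f (e k)).Vertical) (hmono : StrictMono fun k => (f (e k)).a.1) {a : ℝ}
    (ha : ∀ k, a ∈ (f (e k)).ySpan) (Z : κ → κ → ι)
    (hZ : ∀ k l, k < l →
      (f (Z k l)).Horizontal ∧ (gridGraph f).neighborSet (Z k l) = {e k, e l})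
    {i k j l : κ} (hik : i < k) (hkj : k < j) (hjl : j < l) :
    a < (f (Z i j)).a.2 ↔ ¬ a < (f (Z k l)).a.2 := by
  obtain ⟨hZij, hNij⟩ := hZ i j (hik.trans hkj)
  obtain ⟨hZkl, hNkl⟩ := hZ k l (hkj.trans hjl)
  have hmem {z x y : ι} (hz : (f z).Horizontal) (hx : (f x).Vertical)
      (hN : (gridGraph f).neighborSet z = {x, y}) : (f z).a.2 ∈ (f x).ySpan :=
    ((gridGraph_adj_iff hz hx).1 (by simp [← SimpleGraph.mem_neighborSet, hN])).2
  refine Set.ordConnected_uIcc.lt_iff_not_lt_of_mem_diff Set.ordConnected_uIcc (ha k) (ha j)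
    ⟨hmem hZij (hv j) (Set.pair_comm (e i) (e j) ▸ hNij), ?_⟩ ⟨hmem hZkl (hv k) hNkl, ?_⟩
  · exact snd_notMem_ySpan_of_neighborSet_eq hZij (hv i) (hv j) (hv k) hNij
      (hmono hik) (hmono hkj)
  · exact snd_notMem_ySpan_of_neighborSet_eq hZkl (hv k) (hv l) (hv j) hNkl
      (hmono hkj) (hmono hjl)

variable [Fintype ι]

lemma IsGrid.eq_of_mem_of_mem (hgrid : IsGrid f) {i j : ι} {p : ℝ × ℝ}
    (hcol : Collinear ℝ ((f i).toSet ∪ (f j).toSet)) (hi : p ∈ (f i).toSet)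
    (hj : p ∈ (f j).toSet) : i = j := by
  by_contra hij
  exact Set.disjoint_left.mp (hgrid.2.2.1 i j hij hcol) hi hj

lemma IsGrid.eq_of_vertical_of_mem (hgrid : IsGrid f) {i j : ι} {p : ℝ × ℝ}
    (hvi : (f i).Vertical) (hvj : (f j).Vertical) (hi : p ∈ (f i).toSet)
    (hj : p ∈ (f j).toSet) : i = j := by
  refine hgrid.eq_of_mem_of_mem (collinear_of_forall_fst_eq (c := p.1) ?_) hi hj
  rintro q (hq | hq)
  · rw [GridSeg.fst_eq_of_mem hvi hq, GridSeg.fst_eq_of_mem hvi hi]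
  · rw [GridSeg.fst_eq_of_mem hvj hq, GridSeg.fst_eq_of_mem hvj hj]

lemma IsGrid.eq_of_horizontal_of_mem (hgrid : IsGrid f) {i j : ι} {p : ℝ × ℝ}
    (hhi : (f i).Horizontal) (hhj : (f j).Horizontal) (hi : p ∈ (f i).toSet)
    (hj : p ∈ (f j).toSet) : i = j := by
  refine hgrid.eq_of_mem_of_mem (collinear_of_forall_snd_eq (c := p.2) ?_) hi hj
  rintro q (hq | hq)
  · rw [GridSeg.snd_eq_of_mem hhi hq, GridSeg.snd_eq_of_mem hhi hi]
  · rw [GridSeg.snd_eq_of_mem hhj hq, GridSeg.snd_eq_of_mem hhj hj]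

lemma IsGrid.vertical_of_adj (hgrid : IsGrid f) {b x : ι} (hb : (f b).Horizontal)
    (hbx : (gridGraph f).Adj b x) : (f x).Vertical := by
  obtain ⟨hne, p, hpb, hpx⟩ := hbx
  refine (f x).aligned.resolve_right fun hx => hne ?_
  exact hgrid.eq_of_horizontal_of_mem hb hx hpb hpx

lemma IsGrid.eq_of_adj_of_fst_eq (hgrid : IsGrid f) {b x y : ι} (hb : (f b).Horizontal)
    (hx : (f x).Vertical) (hy : (f y).Vertical) (hbx : (gridGraph f).Adj b x)
    (hby : (gridGraph f).Adj b y) (hxy : (f x).a.1 = (f y).a.1) : x = y := by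
  refine hgrid.eq_of_vertical_of_mem (p := ((f x).a.1, (f b).a.2)) hx hy ?_ ?_
  · rw [GridSeg.toSet_of_vertical hx]
    exact ⟨rfl, ((gridGraph_adj_iff hb hx).1 hbx).2⟩
  · rw [GridSeg.toSet_of_vertical hy, hxy]
    exact ⟨rfl, ((gridGraph_adj_iff hb hy).1 hby).2⟩

end

theorem grid_horizontal_degree_le_four_general {ι : Type} [Fintype ι] (f : ι → GridSeg)
    (hgrid : IsGrid f)
    (hpair : ∀ x y : ι, (f x).Vertical → (f y).Vertical → x ≠ y →
      (∃ w, (gridGraph f).Adj x w ∧ (gridGraph f).Adj y w) →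
      ∃ z, (f z).Horizontal ∧ (gridGraph f).neighborSet z = {x, y}) :
    ∀ b : ι, (f b).Horizontal → ((gridGraph f).neighborSet b).ncard ≤ 4 := by
  intro b hb
  by_contra! hdeg
  obtain ⟨e, hbe, hmono⟩ := (Set.toFinite _).exists_fin_strictMono_comp
    (g := fun x => (f x).a.1) (fun x hx y hy => hgrid.eq_of_adj_of_fst_eq hb
      (hgrid.vertical_of_adj hb hx) (hgrid.vertical_of_adj hb hy) hx hy) hdeg
  have hv (k : Fin 5) : (f (e k)).Vertical := hgrid.vertical_of_adj hb (hbe k)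
  have hZ (k l : Fin 5) :
      ∃ z, k < l → (f z).Horizontal ∧ (gridGraph f).neighborSet z = {e k, e l} := by
    by_cases hkl : k < l
    · obtain ⟨z, hz⟩ := hpair (e k) (e l) (hv k) (hv l) (hmono.injective.of_comp.ne hkl.ne)
        ⟨b, (gridGraph f).adj_symm (hbe k), (gridGraph f).adj_symm (hbe l)⟩
      exact ⟨z, fun _ => hz⟩
    · exact ⟨b, fun h => absurd h hkl⟩
  choose Z hZ using hZ
  exact not_forall_interleaved_iff_not_fin_five _ fun i k j l =>
    lt_snd_iff_not_lt_snd_of_interleaved e hv hmono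
      (fun k => ((gridGraph_adj_iff hb (hv k)).1 (hbe k)).2) Z hZ

theorem grid_horizontal_degree_le_four {ι : Type} [Fintype ι] (f : ι → GridSeg)
    (hgrid : IsGrid f)
    (hleafless : ∀ v : ι, ((gridGraph f).neighborSet v).ncard ≠ 1)
    (hpair : ∀ x y : ι, (f x).Vertical → (f y).Vertical → x ≠ y →
      (∃ w, (gridGraph f).Adj x w ∧ (gridGraph f).Adj y w) →
      ∃ z, (f z).Horizontal ∧ (gridGraph f).neighborSet z = {x, y}) :
    ∀ b : ι, (f b).Horizontal → ((gridGraph f).neighborSet b).ncard ≤ 4 :=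
  grid_horizontal_degree_le_four_general f hgrid hpair
end
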